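/- Let n ≥ 2, I = {0,1,…,n}, and let A be the affine Cartan matrix of type D_{n+1}^{(2)}: a_{ii} = 2, a_{01} = -2, a_{10} = -1, a_{i,i+1} = a_{i+1,i} = -1 for 1 ≤ i ≤ n−2, a_{n-1,n} = -1, a_{n,n-1} = -2, and all other entries 0; set q_0 = q_n = p and q_i = p^2 for 1 ≤ i ≤ n−1. Define z_1 = x_0^{-2} x_1, z_i = x_{i-1}^{-1} x_i for 2 ≤ i ≤ n−1, and z_n = x_{n-1}^{-1} x_n^2 (so that y_0 = z_1^{-1}, y_i = z_i z_{i+1}^{-1} for 1 ≤ i ≤ n−1, and y_n = z_n). Then the tuple φ_0 = (ı/(p − p^{-1}))·{ı·p^{-1}·z_1}_0, φ_i = {ı·p·z_i}_i·{ı·p^{-1}·z_{i+1}}_i for 1 ≤ i ≤ n−1, and φ_n = (ı/(p − p^{-1}))·{ı·p·z_n}_n satisfies the shiftability system for A. -/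

import Mathlib

noncomputable section

/-- The Laurent polynomial algebra `ℂ[x_i^{±1} : i ∈ ι]`, realized as the group algebra of the
free abelian group `ι → ℤ` over `ℂ` (for `ι` finite this is `ℤ^ι`). -/
abbrev LaurentAlg (ι : Type*) : Type _ := AddMonoidAlgebra ℂ (ι → ℤ)

/-- The monomial `∏_i x_i^{μ i}`. -/
def mono {ι : Type*} (μ : ι → ℤ) : LaurentAlg ι := AddMonoidAlgebra.single μ 1

lemma mono_zero {ι : Type*} : mono (0 : ι → ℤ) = 1 := rfl

lemma mono_add {ι : Type*} (μ ν : ι → ℤ) : mono (μ + ν) = mono μ * mono ν := by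
  simp [mono, AddMonoidAlgebra.single_mul_single]

/-- The auxiliary monoid homomorphism `μ ↦ c^{-μ i} · x^μ` underlying `ζ_i`. -/
def zetaHom {ι : Type*} (c : ℂˣ) (i : ι) : Multiplicative (ι → ℤ) →* LaurentAlg ι where
  toFun μ := ((c ^ (-(Multiplicative.toAdd μ i)) : ℂˣ) : ℂ) • mono (Multiplicative.toAdd μ)
  map_one' := by
    simp [mono_zero]
  map_mul' μ ν := by
    show ((c ^ (-(Multiplicative.toAdd (μ * ν) i)) : ℂˣ) : ℂ) • mono (Multiplicative.toAdd (μ * ν)) = _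
    have h : Multiplicative.toAdd (μ * ν) = Multiplicative.toAdd μ + Multiplicative.toAdd ν := rfl
    rw [h, mono_add, Pi.add_apply, neg_add, zpow_add, Units.val_mul, mul_smul,
      smul_mul_assoc, mul_smul_comm]

/-- The `ℂ`-algebra endomorphism `ζ_i` of the Laurent polynomial algebra determined by
`ζ_i(x_j) = c^{-δ_{ij}} x_j` (its inverse automorphism is `zeta c⁻¹ i`). -/
def zeta {ι : Type*} (c : ℂˣ) (i : ι) : LaurentAlg ι →ₐ[ℂ] LaurentAlg ι :=
  AddMonoidAlgebra.lift ℂ (LaurentAlg ι) (ι → ℤ) (zetaHom c i)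

/-- The element `{u}_s = (u - u⁻¹)/(s - s⁻¹)` for the unit `u = c · x^μ` of the Laurent
polynomial algebra (whose inverse is `c⁻¹ · x^{-μ}`). -/
def brk {ι : Type*} (s c : ℂ) (μ : ι → ℤ) : LaurentAlg ι :=
  ((s - s⁻¹)⁻¹ : ℂ) • (c • mono μ - c⁻¹ • mono (-μ))

/-- The shiftability system (4.1) for the integer matrix `a` with parameters `q i`:
`ζ_i(φ_i) − φ_i = {y_i}_i` for all `i`, and `φ_i φ_j = ζ_j^{-1}(φ_i)·ζ_i^{-1}(φ_j)` for `i ≠ j`,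
where `y_i = ∏_j x_j^{a j i}`. -/
def ShiftSystem {ι : Type*} (a : ι → ι → ℤ) (q : ι → ℂˣ) (φ : ι → LaurentAlg ι) : Prop :=
  (∀ i, zeta (q i) i (φ i) - φ i = brk ((q i : ℂ)) 1 (fun j => a j i)) ∧
  (∀ i j, i ≠ j → φ i * φ j = zeta (q j)⁻¹ j (φ i) * zeta (q i)⁻¹ i (φ j))

/-- The exponent vector of the single variable `x_k`. -/
def xvec {ι : Type*} [DecidableEq ι] (k : ι) : ι → ℤ := fun j => if j = k then 1 else 0

end

noncomputable section

open Complex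

/-- The vectors of exponents of `z_1 = x_0⁻²x_1`, `z_i = x_{i-1}⁻¹x_i` (`2 ≤ i ≤ n−1`),
`z_n = x_{n-1}⁻¹x_n²` for type `D_{n+1}^{(2)}`. -/
def zD (n : ℕ) (i : Fin (n + 1)) : Fin (n + 1) → ℤ :=
  if (i : ℕ) = 1 then xvec 1 - xvec 0 - xvec 0
  else if (i : ℕ) = n then xvec i + xvec i - xvec (i - 1)
  else xvec i - xvec (i - 1)

/-!
On a unit `c • x^μ` the automorphism `ζ_k` only rescales `c` by `q_k^{-μ_k}` (`zeta_brk`), so every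
equation of the system is an identity between brackets of at most three exponent vectors. The
diagonal equations come from `{ı a u}_s - {ı a⁻¹ u}_s = ı (a - a⁻¹) {u}_s` and its quadratic analogue
`brk_sq_mul_sub`. Off the diagonal, `φ_i` involves only `x_{i-1}, x_i, x_{i+1}`, so for nonadjacent
nodes both twists are trivial; for adjacent nodes the twists exchange the coefficients `ı p^{±1}` of
brackets of the same vector, and `{c u}_s {d u}_t` is symmetric in `c, d`.
-/

lemma sub_inv_ne_zero_of_sq_ne_one {K : Type*} [Field K] {a : K} (ha : a ≠ 0) (h : a ^ 2 ≠ 1) :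
    a - a⁻¹ ≠ 0 := by
  rw [sub_ne_zero]
  intro h'
  apply h
  rw [sq]
  nth_rw 2 [h']
  exact mul_inv_cancel₀ ha

section Brackets

variable {ι : Type*}

lemma mono_mul_mono (μ ν : ι → ℤ) : mono μ * mono ν = mono (μ + ν) := (mono_add μ ν).symm

lemma zeta_mono (c : ℂˣ) (k : ι) (μ : ι → ℤ) :
    zeta c k (mono μ) = ((c : ℂ) ^ (-μ k)) • mono μ := by
  simp [zeta, mono, AddMonoidAlgebra.lift_single, zetaHom, Units.val_zpow_eq_zpow_val]

lemma zeta_brk (c : ℂˣ) (k : ι) (s d : ℂ) (μ : ι → ℤ) :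
    zeta c k (brk s d μ) = brk s ((c : ℂ) ^ (-μ k) * d) μ := by
  simp only [brk, map_smul, map_sub, zeta_mono, Pi.neg_apply, neg_neg, smul_smul, mul_inv,
    zpow_neg, inv_inv]
  ring_nf

lemma zeta_brk_of_eq {c : ℂˣ} {k : ι} {s d d' : ℂ} {μ : ι → ℤ} {m : ℤ} (hμ : μ k = m)
    (hd : (c : ℂ) ^ (-m) * d = d') : zeta c k (brk s d μ) = brk s d' μ := by
  rw [zeta_brk, hμ, hd]

lemma zeta_brk_of_eq_zero {c : ℂˣ} {k : ι} {s d : ℂ} {μ : ι → ℤ} (hμ : μ k = 0) :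
    zeta c k (brk s d μ) = brk s d μ :=
  zeta_brk_of_eq hμ (by simp)

lemma brk_one_neg (s : ℂ) (μ : ι → ℤ) : brk s 1 (-μ) = -brk s 1 μ := by
  simp only [brk, neg_neg, inv_one, one_smul, neg_sub, smul_sub]

lemma brk_I_mul_sub (s a : ℂ) (μ : ι → ℤ) :
    brk s (I * a) μ - brk s (I * a⁻¹) μ = (I * (a - a⁻¹)) • brk s 1 μ := by
  simp only [brk, mul_inv, inv_I, inv_inv, inv_one, one_smul]
  module

lemma brk_mul_brk_comm (s t c d : ℂ) (μ : ι → ℤ) :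
    brk s c μ * brk t d μ = brk s d μ * brk t c μ := by
  simp only [brk, smul_mul_smul_comm, sub_mul, mul_sub, mono_mul_mono, neg_add_cancel,
    add_neg_cancel]
  module

lemma brk_sq_mul_sub {a : ℂ} (ha : a ^ 2 - (a ^ 2)⁻¹ ≠ 0) (μ ν : ι → ℤ) :
    brk (a ^ 2) (I * a⁻¹) μ * brk (a ^ 2) (I * a) ν -
        brk (a ^ 2) (I * a) μ * brk (a ^ 2) (I * a⁻¹) ν = brk (a ^ 2) 1 (μ - ν) := by
  have ha0 : a ≠ 0 := by rintro rfl; simp at ha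
  have ha4 : a ^ 4 - 1 ≠ 0 := by
    contrapose! ha
    field_simp
    linear_combination ha
  simp only [brk, smul_mul_smul_comm, sub_mul, mul_sub, mono_mul_mono]
  rw [← sub_eq_add_neg, show -μ + ν = -(μ - ν) by abel, show -μ + -ν = -(μ + ν) by abel]
  match_scalars <;> field_simp <;> ring

end Brackets

section Nodes

variable {ι : Type*} (p : ℂˣ) {k l : ι}

lemma I_mul_inv_smul_brk_sub {a : ℂ} (ha : a - a⁻¹ ≠ 0) (s : ℂ) (μ : ι → ℤ) :
    (I * (a - a⁻¹)⁻¹) • (brk s (I * a) μ - brk s (I * a⁻¹) μ) = -brk s 1 μ := by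
  rw [brk_I_mul_sub, smul_smul,
    mul_mul_mul_comm, I_mul_I, inv_mul_cancel₀ ha, mul_one, neg_one_smul]

lemma zeta_sub_self_of_left_end (hp : (p : ℂ) - (p : ℂ)⁻¹ ≠ 0) {μ : ι → ℤ} (hμ : μ k = -2) :
    zeta p k ((I * ((p : ℂ) - (p : ℂ)⁻¹)⁻¹) • brk (p : ℂ) (I * (p : ℂ)⁻¹) μ) -
        (I * ((p : ℂ) - (p : ℂ)⁻¹)⁻¹) • brk (p : ℂ) (I * (p : ℂ)⁻¹) μ =
      brk (p : ℂ) 1 (-μ) := by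
  rw [map_smul, zeta_brk_of_eq hμ (d' := I * p) (by norm_num; field_simp), ← smul_sub,
    I_mul_inv_smul_brk_sub hp, brk_one_neg]

lemma zeta_sub_self_of_right_end (hp : (p : ℂ) - (p : ℂ)⁻¹ ≠ 0) {μ : ι → ℤ} (hμ : μ k = 2) :
    zeta p k ((I * ((p : ℂ) - (p : ℂ)⁻¹)⁻¹) • brk (p : ℂ) (I * (p : ℂ)) μ) -
        (I * ((p : ℂ) - (p : ℂ)⁻¹)⁻¹) • brk (p : ℂ) (I * (p : ℂ)) μ =
      brk (p : ℂ) 1 μ := by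
  rw [map_smul, zeta_brk_of_eq hμ (d' := I * (p : ℂ)⁻¹) (by field_simp), ← smul_sub,
    ← neg_sub (brk (p : ℂ) (I * p) μ), smul_neg, I_mul_inv_smul_brk_sub hp, neg_neg]

lemma zeta_sub_self_of_interior (hp : (p : ℂ) ^ 2 - ((p : ℂ) ^ 2)⁻¹ ≠ 0) {μ ν : ι → ℤ}
    (hμ : μ k = 1) (hν : ν k = -1) :
    zeta (p ^ 2) k (brk ((p : ℂ) ^ 2) (I * p) μ * brk ((p : ℂ) ^ 2) (I * (p : ℂ)⁻¹) ν) -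
        brk ((p : ℂ) ^ 2) (I * p) μ * brk ((p : ℂ) ^ 2) (I * (p : ℂ)⁻¹) ν =
      brk ((p : ℂ) ^ 2) 1 (μ - ν) := by
  rw [map_mul, zeta_brk_of_eq hμ (d' := I * (p : ℂ)⁻¹) (by push_cast; field_simp),
    zeta_brk_of_eq hν (d' := I * p) (by push_cast; field_simp), brk_sq_mul_sub hp]

lemma commute_left_end {μ ν : ι → ℤ} (hμl : μ l = 1) (hμk : μ k = -2) (hνk : ν k = 0) :
    let φk := (I * ((p : ℂ) - (p : ℂ)⁻¹)⁻¹) • brk (p : ℂ) (I * (p : ℂ)⁻¹) μ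
    let φl := brk ((p : ℂ) ^ 2) (I * p) μ * brk ((p : ℂ) ^ 2) (I * (p : ℂ)⁻¹) ν
    φk * φl = zeta (p ^ 2)⁻¹ l φk * zeta p⁻¹ k φl := by
  intro φk φl
  simp only [φk, φl, map_smul, map_mul]
  rw [zeta_brk_of_eq hμl (d' := I * p) (by push_cast; field_simp),
    zeta_brk_of_eq hμk (d' := I * (p : ℂ)⁻¹) (by push_cast; field_simp),
    zeta_brk_of_eq_zero hνk, smul_mul_assoc, smul_mul_assoc, ← mul_assoc,
    brk_mul_brk_comm, mul_assoc]

lemma commute_right_end {μ ν : ι → ℤ} (hμl : μ l = 0) (hνl : ν l = 2) (hνk : ν k = -1) :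
    let φk := brk ((p : ℂ) ^ 2) (I * p) μ * brk ((p : ℂ) ^ 2) (I * (p : ℂ)⁻¹) ν
    let φl := (I * ((p : ℂ) - (p : ℂ)⁻¹)⁻¹) • brk (p : ℂ) (I * p) ν
    φk * φl = zeta p⁻¹ l φk * zeta (p ^ 2)⁻¹ k φl := by
  intro φk φl
  simp only [φk, φl, map_smul, map_mul]
  rw [zeta_brk_of_eq_zero hμl, zeta_brk_of_eq hνl (d' := I * p) (by push_cast; field_simp),
    zeta_brk_of_eq hνk (d' := I * (p : ℂ)⁻¹) (by push_cast; field_simp), mul_smul_comm,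
    mul_smul_comm, mul_assoc, mul_assoc, brk_mul_brk_comm]

lemma commute_interior {μ ν ρ : ι → ℤ} (hμl : μ l = 0) (hνl : ν l = 1) (hνk : ν k = -1)
    (hρk : ρ k = 0) :
    let φk := brk ((p : ℂ) ^ 2) (I * p) μ * brk ((p : ℂ) ^ 2) (I * (p : ℂ)⁻¹) ν
    let φl := brk ((p : ℂ) ^ 2) (I * p) ν * brk ((p : ℂ) ^ 2) (I * (p : ℂ)⁻¹) ρ
    φk * φl = zeta (p ^ 2)⁻¹ l φk * zeta (p ^ 2)⁻¹ k φl := by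
  intro φk φl
  simp only [φk, φl, map_mul]
  rw [zeta_brk_of_eq_zero hμl, zeta_brk_of_eq hνl (d' := I * p) (by push_cast; field_simp),
    zeta_brk_of_eq hνk (d' := I * (p : ℂ)⁻¹) (by push_cast; field_simp),
    zeta_brk_of_eq_zero hρk]
  ring

end Nodes

def cartanD (n : ℕ) : Fin (n + 1) → Fin (n + 1) → ℤ := fun i j =>
  if i = j then 2
  else if (i : ℕ) = 0 ∧ (j : ℕ) = 1 then -2
  else if (i : ℕ) = n ∧ (j : ℕ) = n - 1 then -2
  else if (j : ℕ) = (i : ℕ) + 1 ∨ (i : ℕ) = (j : ℕ) + 1 then -1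
  else 0

def paramD (n : ℕ) (p : ℂˣ) : Fin (n + 1) → ℂˣ := fun i =>
  if (i : ℕ) = 0 ∨ (i : ℕ) = n then p else p ^ 2

def phiD (n : ℕ) (p : ℂˣ) : Fin (n + 1) → LaurentAlg (Fin (n + 1)) := fun i =>
  if (i : ℕ) = 0 then
    (I * ((p : ℂ) - (p : ℂ)⁻¹)⁻¹) • brk (p : ℂ) (I * (p : ℂ)⁻¹) (zD n 1)
  else if (i : ℕ) = n then
    (I * ((p : ℂ) - (p : ℂ)⁻¹)⁻¹) • brk (p : ℂ) (I * (p : ℂ)) (zD n i)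
  else
    brk ((p : ℂ) ^ 2) (I * (p : ℂ)) (zD n i) * brk ((p : ℂ) ^ 2) (I * (p : ℂ)⁻¹) (zD n (i + 1))

lemma Fin.val_one_of_two_le {n : ℕ} (hn : 2 ≤ n) : ((1 : Fin (n + 1)) : ℕ) = 1 := by
  rw [Fin.val_one', Nat.mod_eq_of_lt (by omega)]

lemma Fin.val_add_one_of_val_lt {n : ℕ} {i : Fin (n + 1)} (h : (i : ℕ) < n) :
    ((i + 1 : Fin (n + 1)) : ℕ) = i + 1 :=
  Fin.val_add_one_of_lt (by rw [Fin.lt_def, Fin.val_last]; exact h)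

section ExponentsD

variable {n : ℕ} (hn : 2 ≤ n) {i : Fin (n + 1)}
include hn

lemma zD_apply {k : Fin (n + 1)} (hk : 1 ≤ (k : ℕ)) (j : Fin (n + 1)) :
    zD n k j =
      (if (j : ℕ) = k then (if (k : ℕ) = n then 2 else 1) else 0) -
        (if (j : ℕ) + 1 = k then (if (k : ℕ) = 1 then 2 else 1) else 0) := by
  have hsub : ((k - 1 : Fin (n + 1)) : ℕ) = k - 1 := by
    rw [Fin.coe_sub_one, if_neg (by rintro rfl; simp at hk)]
  unfold zD xvec
  split_ifs <;> simp only [Pi.sub_apply, Pi.add_apply, Fin.ext_iff, hsub, Fin.val_one_of_two_le hn,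
    Fin.val_zero] <;> split_ifs <;> omega

lemma zD_self {k : Fin (n + 1)} (hk : 1 ≤ (k : ℕ)) (hkn : (k : ℕ) ≠ n) : zD n k k = 1 := by
  rw [zD_apply hn hk]; split_ifs <;> omega

lemma zD_self_of_eq_last {k : Fin (n + 1)} (hkn : (k : ℕ) = n) : zD n k k = 2 := by
  rw [zD_apply hn (by omega)]; split_ifs <;> omega

lemma zD_one_apply_of_eq_zero {j : Fin (n + 1)} (hj : (j : ℕ) = 0) : zD n 1 j = -2 := by
  rw [zD_apply hn (Fin.val_one_of_two_le hn).ge, Fin.val_one_of_two_le hn]; split_ifs <;> omega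

lemma zD_apply_of_succ_eq {j k : Fin (n + 1)} (hk : (k : ℕ) = j + 1) (hk1 : (k : ℕ) ≠ 1) :
    zD n k j = -1 := by
  rw [zD_apply hn (by omega)]; split_ifs <;> omega

lemma zD_apply_of_ne {j k : Fin (n + 1)} (hk : 1 ≤ (k : ℕ)) (hj : (j : ℕ) ≠ k)
    (hj' : (j : ℕ) + 1 ≠ k) : zD n k j = 0 := by
  rw [zD_apply hn hk]; split_ifs <;> omega

lemma cartanD_col_of_eq_zero (hi : (i : ℕ) = 0) : (fun j => cartanD n j i) = -zD n 1 := by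
  funext j
  have := j.isLt
  simp only [cartanD, Pi.neg_apply, Fin.ext_iff]
  rw [zD_apply hn (Fin.val_one_of_two_le hn).ge, Fin.val_one_of_two_le hn]
  split_ifs <;> omega

lemma cartanD_col_of_eq_last (hi : (i : ℕ) = n) : (fun j => cartanD n j i) = zD n i := by
  funext j
  have := j.isLt
  simp only [cartanD, Fin.ext_iff]
  rw [zD_apply hn (by omega)]
  split_ifs <;> omega

lemma cartanD_col_of_interior (h0 : (i : ℕ) ≠ 0) (hin : (i : ℕ) ≠ n) :
    (fun j => cartanD n j i) = zD n i - zD n (i + 1) := by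
  have hsucc := Fin.val_add_one_of_val_lt (i := i) (by omega)
  funext j
  have := j.isLt
  simp only [cartanD, Pi.sub_apply, Fin.ext_iff]
  rw [zD_apply hn (by omega), zD_apply hn (by omega), hsucc]
  split_ifs <;> omega

end ExponentsD

section PhiD

variable {n : ℕ} (p : ℂˣ) {i : Fin (n + 1)}

lemma phiD_of_eq_zero (h : (i : ℕ) = 0) :
    phiD n p i = (I * ((p : ℂ) - (p : ℂ)⁻¹)⁻¹) • brk (p : ℂ) (I * (p : ℂ)⁻¹) (zD n 1) := by
  rw [phiD, if_pos h]

lemma phiD_of_eq_last (h0 : (i : ℕ) ≠ 0) (h : (i : ℕ) = n) :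
    phiD n p i = (I * ((p : ℂ) - (p : ℂ)⁻¹)⁻¹) • brk (p : ℂ) (I * (p : ℂ)) (zD n i) := by
  rw [phiD, if_neg h0, if_pos h]

lemma phiD_of_interior (h0 : (i : ℕ) ≠ 0) (hn : (i : ℕ) ≠ n) :
    phiD n p i = brk ((p : ℂ) ^ 2) (I * (p : ℂ)) (zD n i) *
      brk ((p : ℂ) ^ 2) (I * (p : ℂ)⁻¹) (zD n (i + 1)) := by
  rw [phiD, if_neg h0, if_neg hn]

lemma paramD_of_end (h : (i : ℕ) = 0 ∨ (i : ℕ) = n) : paramD n p i = p := by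
  rw [paramD, if_pos h]

lemma paramD_of_interior (h0 : (i : ℕ) ≠ 0) (hn : (i : ℕ) ≠ n) : paramD n p i = p ^ 2 := by
  rw [paramD, if_neg (not_or.mpr ⟨h0, hn⟩)]

end PhiD

section ShiftD

variable {n : ℕ} (hn : 2 ≤ n) (p : ℂˣ)
include hn

lemma shiftD_diag (hp1 : (p : ℂ) - (p : ℂ)⁻¹ ≠ 0) (hp2 : (p : ℂ) ^ 2 - ((p : ℂ) ^ 2)⁻¹ ≠ 0)
    (i : Fin (n + 1)) :
    zeta (paramD n p i) i (phiD n p i) - phiD n p i =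
      brk (paramD n p i : ℂ) 1 (fun j => cartanD n j i) := by
  by_cases h0 : (i : ℕ) = 0
  · rw [phiD_of_eq_zero p h0, paramD_of_end p (.inl h0), cartanD_col_of_eq_zero hn h0]
    exact zeta_sub_self_of_left_end p hp1 (zD_one_apply_of_eq_zero hn h0)
  by_cases hin : (i : ℕ) = n
  · rw [phiD_of_eq_last p h0 hin, paramD_of_end p (.inr hin), cartanD_col_of_eq_last hn hin]
    exact zeta_sub_self_of_right_end p hp1 (zD_self_of_eq_last hn hin)
  have hsucc := Fin.val_add_one_of_val_lt (i := i) (by omega)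
  rw [phiD_of_interior p h0 hin, paramD_of_interior p h0 hin, cartanD_col_of_interior hn h0 hin,
    Units.val_pow_eq_pow_val]
  exact zeta_sub_self_of_interior p hp2 (zD_self hn (by omega) hin)
    (zD_apply_of_succ_eq hn hsucc (by omega))

lemma zeta_phiD_of_far (c : ℂˣ) {i k : Fin (n + 1)}
    (hk : (i : ℕ) + 1 < k ∨ (k : ℕ) + 1 < i) :
    zeta c k (phiD n p i) = phiD n p i := by
  have := k.isLt
  by_cases h0 : (i : ℕ) = 0
  · rw [phiD_of_eq_zero p h0, map_smul, zeta_brk_of_eq_zero (zD_apply_of_ne hn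
      (Fin.val_one_of_two_le hn).ge (by rw [Fin.val_one_of_two_le hn]; omega)
      (by rw [Fin.val_one_of_two_le hn]; omega))]
  by_cases hin : (i : ℕ) = n
  · rw [phiD_of_eq_last p h0 hin, map_smul,
      zeta_brk_of_eq_zero (zD_apply_of_ne hn (by omega) (by omega) (by omega))]
  have hsucc := Fin.val_add_one_of_val_lt (i := i) (by omega)
  rw [phiD_of_interior p h0 hin, map_mul,
    zeta_brk_of_eq_zero (zD_apply_of_ne hn (by omega) (by omega) (by omega)),
    zeta_brk_of_eq_zero (zD_apply_of_ne hn (by omega) (by omega) (by omega))]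

lemma shiftD_adjacent {i j : Fin (n + 1)} (hij : (j : ℕ) = i + 1) :
    phiD n p i * phiD n p j =
      zeta (paramD n p j)⁻¹ j (phiD n p i) * zeta (paramD n p i)⁻¹ i (phiD n p j) := by
  have hone := Fin.val_one_of_two_le hn
  by_cases h0 : (i : ℕ) = 0
  · obtain rfl : j = 1 := Fin.ext (by omega)
    have htwo : ((1 + 1 : Fin (n + 1)) : ℕ) = 2 := by rw [Fin.val_add_one_of_val_lt (by omega), hone]
    rw [phiD_of_eq_zero p h0, phiD_of_interior p (by omega) (by omega), paramD_of_end p (.inl h0),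
      paramD_of_interior p (by omega) (by omega)]
    exact commute_left_end p (zD_self hn (by omega) (by omega)) (zD_one_apply_of_eq_zero hn h0)
      (zD_apply_of_ne hn (by omega) (by omega) (by omega))
  have hsucc : i + 1 = j := Fin.ext (by rw [Fin.val_add_one_of_val_lt (by omega)]; omega)
  by_cases hjn : (j : ℕ) = n
  · rw [phiD_of_interior p h0 (by omega), phiD_of_eq_last p (by omega) hjn,
      paramD_of_interior p h0 (by omega), paramD_of_end p (.inr hjn), hsucc]
    exact commute_right_end p (zD_apply_of_ne hn (by omega) (by omega) (by omega))
      (zD_self_of_eq_last hn hjn) (zD_apply_of_succ_eq hn hij (by omega))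
  have hsucc' := Fin.val_add_one_of_val_lt (i := j) (by omega)
  rw [phiD_of_interior p h0 (by omega), phiD_of_interior p (by omega) hjn,
    paramD_of_interior p h0 (by omega), paramD_of_interior p (by omega) hjn, hsucc]
  exact commute_interior p (zD_apply_of_ne hn (by omega) (by omega) (by omega))
    (zD_self hn (by omega) hjn) (zD_apply_of_succ_eq hn hij (by omega))
    (zD_apply_of_ne hn (by omega) (by omega) (by omega))

lemma shiftD_offdiag {i j : Fin (n + 1)} (hij : i ≠ j) :
    phiD n p i * phiD n p j =
      zeta (paramD n p j)⁻¹ j (phiD n p i) * zeta (paramD n p i)⁻¹ i (phiD n p j) := by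
  have hij' : (i : ℕ) ≠ j := Fin.val_ne_of_ne hij
  rcases lt_trichotomy ((j : ℕ)) (i + 1) with hlt | heq | hgt
  · rcases lt_trichotomy ((i : ℕ)) (j + 1) with hlt' | heq' | hgt'
    · omega
    · rw [mul_comm, shiftD_adjacent hn p heq', mul_comm]
    · rw [zeta_phiD_of_far hn p _ (.inr hgt'), zeta_phiD_of_far hn p _ (.inl hgt')]
  · exact shiftD_adjacent hn p heq
  · rw [zeta_phiD_of_far hn p _ (.inl hgt), zeta_phiD_of_far hn p _ (.inr hgt)]

end ShiftD

/-- For the affine Cartan matrix of type `D_{n+1}^{(2)}`, `n ≥ 2`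
(`q_0 = q_n = p`, `q_i = p²` otherwise), the tuple `φ_0 = (ı/(p−p⁻¹))·{ı p⁻¹ z_1}_0`,
`φ_i = {ı p z_i}_i·{ı p⁻¹ z_{i+1}}_i` (`1 ≤ i ≤ n−1`), `φ_n = (ı/(p−p⁻¹))·{ı p z_n}_n`
solves the shiftability system. -/
theorem shiftability_Dn12_aff (n : ℕ) (hn : 2 ≤ n)
    (p : ℂˣ) (hp : ∀ m : ℕ, 0 < m → p ^ m ≠ 1) :
    ShiftSystem
      (fun i j : Fin (n + 1) =>
        if i = j then 2
        else if (i : ℕ) = 0 ∧ (j : ℕ) = 1 then -2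
        else if (i : ℕ) = n ∧ (j : ℕ) = n - 1 then -2
        else if (j : ℕ) = (i : ℕ) + 1 ∨ (i : ℕ) = (j : ℕ) + 1 then -1
        else 0)
      (fun i : Fin (n + 1) => if (i : ℕ) = 0 ∨ (i : ℕ) = n then p else p ^ 2)
      (fun i : Fin (n + 1) =>
        if (i : ℕ) = 0 then
          (Complex.I * ((p : ℂ) - (p : ℂ)⁻¹)⁻¹) •
            brk (p : ℂ) (Complex.I * (p : ℂ)⁻¹) (zD n 1)
        else if (i : ℕ) = n then
          (Complex.I * ((p : ℂ) - (p : ℂ)⁻¹)⁻¹) •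
            brk (p : ℂ) (Complex.I * (p : ℂ)) (zD n i)
        else
          brk ((p : ℂ) ^ 2) (Complex.I * (p : ℂ)) (zD n i) *
            brk ((p : ℂ) ^ 2) (Complex.I * (p : ℂ)⁻¹) (zD n (i + 1))) := by
  have hp_pow (m : ℕ) (hm : 0 < m) : (p : ℂ) ^ m ≠ 1 :=
    fun h => hp m hm (Units.ext (by push_cast; exact h))
  have hp1 := sub_inv_ne_zero_of_sq_ne_one p.ne_zero (hp_pow 2 two_pos)
  have hp2 := sub_inv_ne_zero_of_sq_ne_one (pow_ne_zero 2 p.ne_zero)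
    (by rw [← pow_mul]; exact hp_pow 4 (by norm_num))
  exact ⟨shiftD_diag hn p hp1 hp2, fun _ _ => shiftD_offdiag hn p⟩

end
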